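/- Let m be a non-negative integer, let q be an integer partition of m with ℓ = |[q]| non-zero parts, and let k be a positive integer. Then the number of k × ℓ matrices with entries in {0,1} whose column sums are q_1, …, q_ℓ equals ∑_{p ⊢ m} (k^{\underline{|[p]|}} / [p]!) · N(p,q), and this number also equals ∏_{i=1}^{ℓ} C(k, q_i), the product of binomial coefficients. -/

import Mathlib

open Finset

/-- Falling factorial of a real number: `x (x-1) ⋯ (x-n+1)`. -/
def fallFac (x : ℝ) (n : ℕ) : ℝ := ∏ i ∈ Finset.range n, (x - i)

/-- `[p]!`: the product of the factorials of the multiplicities of the parts of `p`. -/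
def multFact {m : ℕ} (p : Nat.Partition m) : ℕ :=
  ∏ i ∈ p.parts.toFinset, Nat.factorial (p.parts.count i)

/-- The parts of a partition, as a list, sorted in decreasing order. -/
def partsList {m : ℕ} (p : Nat.Partition m) : List ℕ := p.parts.sort (· ≥ ·)

/-- `N(p,q)`: the number of `|[p]| × |[q]|` binary matrices whose row sums are given
by `p` and whose column sums are given by `q`. -/
noncomputable def Nmat {m : ℕ} (p q : Nat.Partition m) : ℕ :=
  Nat.card {M : Matrix (Fin (Multiset.card p.parts)) (Fin (Multiset.card q.parts)) Bool //
    (∀ i, (∑ j, if M i j then 1 else 0) = (partsList p).getD i 0) ∧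
    (∀ j, (∑ i, if M i j then 1 else 0) = (partsList q).getD j 0)}

/-!
Classify the `k × ℓ` matrices with column sums `q` by the partition `p` of `m` formed by their
nonzero row sums. For a fixed `p` with `n` parts, count pairs `(g, M)` where `g : Fin n ↪ Fin k`
lists the nonzero rows of `M` in the order of the parts of `p`. Choosing `g` first leaves the
`n × ℓ` submatrix free among the `N(p,q)` matrices with row sums `p`, giving `k^(n) · N(p,q)`
pairs. Choosing `M` first, the admissible `g` form a torsor under the permutations of `Fin n`
fixing the tuple of parts, a group of order `[p]!`.

The product formula holds because the columns are independent, column `j` being a `q_j`-subset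
of the `k` rows.
-/

section NonzeroValues

variable {α β : Type*} [Fintype α] [Fintype β]

def nonzeroValues (r : β → ℕ) : Multiset ℕ :=
  (univ.val.map r).filter (· ≠ 0)

theorem sum_nonzeroValues (r : β → ℕ) : (nonzeroValues r).sum = ∑ b, r b := by
  classical
  rw [nonzeroValues, Multiset.filter_map, ← Finset.filter_val, ← Finset.sum_eq_multiset_sum]
  exact Finset.sum_filter_ne_zero _

theorem nonzeroValues_eq_iff {f : α → ℕ} {r : β → ℕ} (hf : ∀ a, f a ≠ 0) (g : α ↪ β)
    (hg : r ∘ g = f) :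
    nonzeroValues r = univ.val.map f ↔ ∀ b ∉ Set.range g, r b = 0 := by
  classical
  have hsplit : univ.val.map r
      = univ.val.map f + (univ.filter (· ∉ Set.range g)).val.map r := by
    have hrange : univ.filter (· ∈ Set.range g) = univ.map g := by ext; simp
    conv_lhs => rw [← Multiset.filter_add_not (· ∈ Set.range g) univ.val]
    rw [Multiset.map_add, ← Finset.filter_val, ← Finset.filter_val, hrange, Finset.map_val,
      Multiset.map_map, hg]
  have hf' : (univ.val.map f).filter (· ≠ 0) = univ.val.map f :=
    Multiset.filter_eq_self.mpr (by simpa using hf)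
  rw [nonzeroValues, hsplit, Multiset.filter_add, hf', add_eq_left, Multiset.filter_eq_nil]
  simp

theorem card_fiber_eq_count (f : α → ℕ) (c : ℕ) :
    Fintype.card {a // f a = c} = (univ.val.map f).count c := by
  classical
  rw [Fintype.card_subtype, Multiset.count_map, Finset.card, Finset.filter_val]
  simp only [eq_comm]

theorem map_subtype_ne_zero_eq_nonzeroValues (r : β → ℕ) :
    univ.val.map (fun b : {b // r b ≠ 0} => r b) = nonzeroValues r := by
  classical
  rw [nonzeroValues, Multiset.filter_map, ← Finset.filter_val]
  exact univ_val_map_subtype_restrict r _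

theorem range_eq_support_of_nonzeroValues_eq {f : α → ℕ} {r : β → ℕ} (hf : ∀ a, f a ≠ 0)
    (hr : nonzeroValues r = univ.val.map f) {g : α ↪ β} (hg : r ∘ g = f) :
    Set.range g = Function.support r := by
  have hzero := (nonzeroValues_eq_iff hf g hg).mp hr
  ext b
  refine ⟨?_, fun hb => not_not.mp fun hnot => hb (hzero b hnot)⟩
  rintro ⟨a, rfl⟩
  exact (congrFun hg a).trans_ne (hf a)

theorem exists_embedding_comp_eq_of_nonzeroValues_eq {f : α → ℕ} {r : β → ℕ}
    (hr : nonzeroValues r = univ.val.map f) : ∃ g : α ↪ β, r ∘ g = f := by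
  classical
  have hfiber (c : ℕ) : Nonempty ({a // f a = c} ≃ {b : {b // r b ≠ 0} // r b = c}) := by
    rw [← Fintype.card_eq, card_fiber_eq_count, card_fiber_eq_count,
      map_subtype_ne_zero_eq_nonzeroValues, hr]
  let e : α ≃ {b // r b ≠ 0} := Equiv.ofFiberEquiv fun c => (hfiber c).some
  exact ⟨e.toEmbedding.trans (Function.Embedding.subtype _),
    funext (Equiv.ofFiberEquiv_map (g := fun b : {b // r b ≠ 0} => r b) _)⟩

end NonzeroValues

theorem Function.Embedding.card_comp_eq_eq_card_stabilizer {α β γ : Type*} {f : α → γ}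
    {r : β → γ} (g₀ : α ↪ β) (h₀ : r ∘ g₀ = f)
    (hrange : ∀ g : α ↪ β, r ∘ g = f → Set.range g = Set.range g₀) :
    Nat.card {g : α ↪ β // r ∘ g = f} = Nat.card {σ : Equiv.Perm α // f ∘ σ = f} := by
  let τ (g : {g : α ↪ β // r ∘ g = f}) : Equiv.Perm α :=
    (Equiv.ofInjective g.1 g.1.injective).trans
      ((Equiv.setCongr (hrange g.1 g.2)).trans (Equiv.ofInjective g₀ g₀.injective).symm)
  have hτ (g : {g : α ↪ β // r ∘ g = f}) (a : α) : g₀ (τ g a) = g.1 a :=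
    Equiv.apply_ofInjective_symm g₀.injective _
  symm
  exact Nat.card_congr
    { toFun := fun σ => ⟨σ.1.toEmbedding.trans g₀,
        funext fun a => (congrFun h₀ (σ.1 a)).trans (congrFun σ.2 a)⟩
      invFun := fun g => ⟨τ g, funext fun a => by
        rw [Function.comp_apply, ← congrFun h₀, Function.comp_apply, hτ]
        exact congrFun g.2 a⟩
      left_inv := fun σ => Subtype.ext <| Equiv.ext fun a => g₀.injective (hτ _ a)
      right_inv := fun g => Subtype.ext <| DFunLike.ext _ _ (hτ g) }

section Partition

variable {m : ℕ}

def partsFn (p : Nat.Partition m) (i : Fin (Multiset.card p.parts)) : ℕ :=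
  (partsList p).getD i 0

theorem map_partsFn (p : Nat.Partition m) : univ.val.map (partsFn p) = p.parts := by
  have hlist : List.ofFn (partsFn p) = partsList p :=
    List.ext_getElem (by simp [partsList]) fun i _ h => by
      rw [List.getElem_ofFn]; exact List.getD_eq_getElem _ _ h
  rw [Fin.univ_val_map, hlist]
  exact Multiset.sort_eq _ _

theorem partsFn_ne_zero (p : Nat.Partition m) (i : Fin (Multiset.card p.parts)) :
    partsFn p i ≠ 0 :=
  (p.parts_pos (map_partsFn p ▸ Multiset.mem_map_of_mem _ (mem_univ i))).ne'

theorem sum_partsFn (p : Nat.Partition m) : ∑ i, partsFn p i = m := by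
  rw [sum_eq_multiset_sum, map_partsFn, p.parts_sum]

theorem prod_map_parts {M : Type*} [CommMonoid M] (p : Nat.Partition m) (f : ℕ → M) :
    (p.parts.map f).prod = ∏ i, f (partsFn p i) := by
  conv_lhs => rw [← map_partsFn p]
  rw [Multiset.map_map, prod_eq_multiset_prod]
  rfl

theorem card_stabilizer_partsFn (p : Nat.Partition m) :
    Nat.card {σ : Equiv.Perm (Fin (Multiset.card p.parts)) // partsFn p ∘ σ = partsFn p}
      = multFact p := by
  classical
  have himage : univ.image (partsFn p) = p.parts.toFinset := by
    conv_rhs => rw [← map_partsFn p]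
    rw [Multiset.toFinset_map, Finset.val_toFinset]
  rw [Nat.card_eq_fintype_card, DomMulAct.stabilizer_card', himage, multFact]
  refine prod_congr rfl fun c _ => ?_
  rw [card_fiber_eq_count, map_partsFn]

theorem card_embedding_comp_eq_partsFn {β : Type*} [Fintype β] {p : Nat.Partition m}
    {r : β → ℕ} (hr : nonzeroValues r = p.parts) :
    Nat.card {g : Fin (Multiset.card p.parts) ↪ β // r ∘ g = partsFn p} = multFact p := by
  rw [← map_partsFn p] at hr
  obtain ⟨g₀, h₀⟩ := exists_embedding_comp_eq_of_nonzeroValues_eq hr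
  have hrange {g : Fin (Multiset.card p.parts) ↪ β} (hg : r ∘ g = partsFn p) :=
    range_eq_support_of_nonzeroValues_eq (partsFn_ne_zero p) hr hg
  rw [g₀.card_comp_eq_eq_card_stabilizer h₀ fun g hg => (hrange hg).trans (hrange h₀).symm,
    card_stabilizer_partsFn]

end Partition

section BoolMatrix

variable {α ι κ : Type*} [Fintype ι] [Fintype κ]

def rowSum (M : Matrix ι κ Bool) (i : ι) : ℕ := ∑ j, if M i j then 1 else 0

def colSum (M : Matrix ι κ Bool) (j : κ) : ℕ := ∑ i, if M i j then 1 else 0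

theorem sum_rowSum (M : Matrix ι κ Bool) : ∑ i, rowSum M i = ∑ j, colSum M j :=
  sum_comm

omit [Fintype ι] in
theorem rowSum_eq_zero_iff {M : Matrix ι κ Bool} {i : ι} :
    rowSum M i = 0 ↔ ∀ j, M i j = false := by
  simp [rowSum]

omit [Fintype κ] in
theorem colSum_submatrix [Fintype α] {M : Matrix ι κ Bool} (g : α ↪ ι)
    (hM : ∀ i ∉ Set.range g, ∀ j, M i j = false) (j : κ) :
    colSum (M.submatrix g id) j = colSum M j :=
  Fintype.sum_of_injective g g.injective _ _ (fun i hi => by simp [hM i hi j]) fun _ => rfl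

noncomputable def restrictRowsEquiv (g : α ↪ ι) :
    {M : Matrix ι κ Bool // ∀ i ∉ Set.range g, ∀ j, M i j = false} ≃ Matrix α κ Bool where
  toFun M := M.1.submatrix g id
  invFun M' := ⟨Function.extend g M' fun _ _ => false, fun i hi j =>
    congrFun (Function.extend_apply' M' _ i fun ⟨a, ha⟩ => hi ⟨a, ha⟩) j⟩
  left_inv M := Subtype.ext <| funext fun i => by
    by_cases hi : i ∈ Set.range g
    · obtain ⟨a, rfl⟩ := hi
      exact g.injective.extend_apply (M.1.submatrix g id) (fun _ _ => false) a
    · exact (Function.extend_apply' (M.1.submatrix g id) (fun _ _ => false) i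
        fun ⟨a, ha⟩ => hi ⟨a, ha⟩).trans (funext fun j => (M.2 i hi j).symm)
  right_inv M' := funext fun a => g.injective.extend_apply M' (fun _ _ => false) a

noncomputable def restrictRowsEquivOfNonzeroValues [Fintype α] (g : α ↪ ι) {f : α → ℕ}
    (hf : ∀ a, f a ≠ 0) (c : κ → ℕ) :
    {M : Matrix ι κ Bool // (∀ j, colSum M j = c j) ∧ rowSum M ∘ g = f ∧
        nonzeroValues (rowSum M) = univ.val.map f} ≃
      {M' : Matrix α κ Bool // (∀ i, rowSum M' i = f i) ∧ ∀ j, colSum M' j = c j} := by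
  refine (Equiv.subtypeEquivRight fun M => ?_).trans
    ((Equiv.subtypeSubtypeEquivSubtypeInter
      (fun M : Matrix ι κ Bool => ∀ i ∉ Set.range g, ∀ j, M i j = false)
      fun M => (∀ j, colSum M j = c j) ∧ rowSum M ∘ g = f).symm.trans
      (Equiv.subtypeEquiv (restrictRowsEquiv g) fun M => ?_))
  · constructor
    · rintro ⟨hc, hr, hn⟩
      exact ⟨fun i hi => rowSum_eq_zero_iff.mp ((nonzeroValues_eq_iff hf g hr).mp hn i hi),
        hc, hr⟩
    · rintro ⟨hz, hc, hr⟩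
      exact ⟨hc, hr, (nonzeroValues_eq_iff hf g hr).mpr fun i hi =>
        rowSum_eq_zero_iff.mpr (hz i hi)⟩
  · rw [and_comm, funext_iff]
    exact Iff.and Iff.rfl (forall_congr' fun j => by rw [← colSum_submatrix g M.2]; rfl)

theorem card_sum_boole_eq_choose (a : ℕ) :
    Nat.card {v : ι → Bool // (∑ i, if v i then 1 else 0) = a} = (Fintype.card ι).choose a := by
  classical
  let e : (ι → Bool) ≃ Finset ι :=
    { toFun v := univ.filter fun i => v i
      invFun s i := decide (i ∈ s)
      left_inv v := by ext; simp
      right_inv s := by ext; simp }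
  rw [Nat.card_congr (e.subtypeEquiv (q := fun s => s.card = a) fun v => by simp [e, sum_boole]),
    Nat.card_eq_fintype_card, Fintype.card_finset_len]

theorem card_colSum_eq_prod_choose (c : κ → ℕ) :
    Nat.card {M : Matrix ι κ Bool // ∀ j, colSum M j = c j}
      = ∏ j, (Fintype.card ι).choose (c j) := by
  let e : {M : Matrix ι κ Bool // ∀ j, colSum M j = c j} ≃
      ∀ j, {v : ι → Bool // (∑ i, if v i then 1 else 0) = c j} :=
    { toFun M j := ⟨fun i => M.1 i j, M.2 j⟩
      invFun v := ⟨fun i j => (v j).1 i, fun j => (v j).2⟩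
      left_inv _ := rfl
      right_inv _ := rfl }
  rw [Nat.card_congr e, Nat.card_pi]
  exact prod_congr rfl fun j _ => card_sum_boole_eq_choose (c j)

end BoolMatrix

theorem fallFac_natCast (k n : ℕ) : fallFac k n = k.descFactorial n := by
  rw [fallFac, ← descPochhammer_eval_eq_prod_range, descPochhammer_eval_eq_descFactorial]

section Counting

variable {m : ℕ} (k : ℕ) (q : Nat.Partition m)

def rowShape {M : Matrix (Fin k) (Fin (Multiset.card q.parts)) Bool}
    (hM : ∀ j, colSum M j = partsFn q j) : Nat.Partition m where
  parts := nonzeroValues (rowSum M)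
  parts_pos hi := Nat.pos_of_ne_zero (Multiset.mem_filter.mp hi).2
  parts_sum := by
    rw [sum_nonzeroValues, sum_rowSum]
    exact (sum_congr rfl fun j _ => hM j).trans (sum_partsFn q)

theorem card_nonzeroValues_rowSum_mul_multFact (p : Nat.Partition m) :
    Nat.card {M : Matrix (Fin k) (Fin (Multiset.card q.parts)) Bool //
        (∀ j, colSum M j = partsFn q j) ∧ nonzeroValues (rowSum M) = p.parts} * multFact p
      = k.descFactorial (Multiset.card p.parts) * Nmat p q := by
  classical
  let S := {M : Matrix (Fin k) (Fin (Multiset.card q.parts)) Bool //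
    (∀ j, colSum M j = partsFn q j) ∧ nonzeroValues (rowSum M) = p.parts}
  let E : (Σ M : S, {g : Fin (Multiset.card p.parts) ↪ Fin k // rowSum M.1 ∘ g = partsFn p}) ≃
      Σ g : Fin (Multiset.card p.parts) ↪ Fin k,
        {M : Matrix (Fin k) (Fin (Multiset.card q.parts)) Bool //
          (∀ j, colSum M j = partsFn q j) ∧ rowSum M ∘ g = partsFn p ∧
            nonzeroValues (rowSum M) = univ.val.map (partsFn p)} :=
    { toFun x := ⟨x.2.1, x.1.1, x.1.2.1, x.2.2, x.1.2.2.trans (map_partsFn p).symm⟩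
      invFun y := ⟨⟨y.2.1, y.2.2.1, y.2.2.2.2.trans (map_partsFn p)⟩, y.1, y.2.2.2.1⟩
      left_inv _ := rfl
      right_inv _ := rfl }
  calc Nat.card S * multFact p
      = Nat.card (Σ M : S, {g : Fin (Multiset.card p.parts) ↪ Fin k //
          rowSum M.1 ∘ g = partsFn p}) := by
        rw [Nat.card_sigma, sum_congr rfl fun M _ => card_embedding_comp_eq_partsFn M.2.2,
          sum_const, card_univ, smul_eq_mul, Nat.card_eq_fintype_card]
    _ = Nat.card ((Fin (Multiset.card p.parts) ↪ Fin k) ×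
          {M' : Matrix (Fin (Multiset.card p.parts)) (Fin (Multiset.card q.parts)) Bool //
            (∀ i, rowSum M' i = partsFn p i) ∧ ∀ j, colSum M' j = partsFn q j}) :=
        Nat.card_congr (E.trans (Equiv.sigmaEquivProdOfEquiv fun g =>
          restrictRowsEquivOfNonzeroValues g (partsFn_ne_zero p) (partsFn q)))
    _ = k.descFactorial (Multiset.card p.parts) * Nmat p q := by
        rw [Nat.card_prod, Nat.card_eq_fintype_card (α := _ ↪ _), Fintype.card_embedding_eq,
          Fintype.card_fin, Fintype.card_fin]
        rfl

theorem card_colSum_eq_sum_card_nonzeroValues :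
    Nat.card {M : Matrix (Fin k) (Fin (Multiset.card q.parts)) Bool //
        ∀ j, colSum M j = partsFn q j}
      = ∑ p : Nat.Partition m, Nat.card {M : Matrix (Fin k) (Fin (Multiset.card q.parts)) Bool //
          (∀ j, colSum M j = partsFn q j) ∧ nonzeroValues (rowSum M) = p.parts} := by
  rw [← Nat.card_sigma]
  exact Nat.card_congr
    { toFun M := ⟨rowShape k q M.2, M.1, M.2, rfl⟩
      invFun x := ⟨x.2.1, x.2.2.1⟩
      left_inv _ := rfl
      right_inv := fun ⟨p, M, hc, hp⟩ => by
        obtain rfl : rowShape k q hc = p := Nat.Partition.ext hp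
        rfl }

theorem card_colSum_eq_sum_fallFac :
    (Nat.card {M : Matrix (Fin k) (Fin (Multiset.card q.parts)) Bool //
        ∀ j, colSum M j = partsFn q j} : ℝ)
      = ∑ p : Nat.Partition m, fallFac k (Multiset.card p.parts) / multFact p * Nmat p q := by
  rw [card_colSum_eq_sum_card_nonzeroValues, Nat.cast_sum]
  refine sum_congr rfl fun p _ => ?_
  have hp : (multFact p : ℝ) ≠ 0 := by
    exact_mod_cast (prod_pos fun i _ => Nat.factorial_pos _).ne'
  rw [fallFac_natCast, div_mul_eq_mul_div, eq_div_iff hp]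
  exact_mod_cast card_nonzeroValues_rowSum_mul_multFact k q p

end Counting

theorem stmt3_general (m k : ℕ) (q : Nat.Partition m) :
    ((Nat.card {M : Matrix (Fin k) (Fin (Multiset.card q.parts)) Bool //
        ∀ j, (∑ i, if M i j then 1 else 0) = (partsList q).getD j 0} : ℝ)
      = ∑ p : Nat.Partition m,
          fallFac k (Multiset.card p.parts) / multFact p * Nmat p q) ∧
    Nat.card {M : Matrix (Fin k) (Fin (Multiset.card q.parts)) Bool //
        ∀ j, (∑ i, if M i j then 1 else 0) = (partsList q).getD j 0}
      = (q.parts.map fun a => Nat.choose k a).prod := by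
  refine ⟨card_colSum_eq_sum_fallFac k q, ?_⟩
  rw [prod_map_parts]
  exact (card_colSum_eq_prod_choose (ι := Fin k) (partsFn q)).trans (by rw [Fintype.card_fin])

theorem stmt3 (m k : ℕ) (hk : 0 < k) (q : Nat.Partition m) :
    ((Nat.card {M : Matrix (Fin k) (Fin (Multiset.card q.parts)) Bool //
        ∀ j, (∑ i, if M i j then 1 else 0) = (partsList q).getD j 0} : ℝ)
      = ∑ p : Nat.Partition m,
          fallFac k (Multiset.card p.parts) / multFact p * Nmat p q) ∧
    Nat.card {M : Matrix (Fin k) (Fin (Multiset.card q.parts)) Bool //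
        ∀ j, (∑ i, if M i j then 1 else 0) = (partsList q).getD j 0}
      = (q.parts.map fun a => Nat.choose k a).prod :=
  stmt3_general m k q
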